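/- arXiv:2604.26529 — 2 statements merged into one kernel-verified Lean document; each statement's English description precedes it below -/
import Mathlib

section
/- Let n > m ≥ 2 be integers with 4/(n-m) < (2m-2)/m and n - m > 2, and λ > 0. Set C₃ = −2/(n−m−2) and C₄ = ((n−m) − 2m/(m−1))/(n−m−2)², so C₃ < 0 and C₄ > 0. Define u(r) = (cosh(√(C₄λ) r))^{−mC₃/((2m−2)C₄)} and f(r) = (cosh(√(C₄λ) r))^{(C₃−1)/((n−m)C₄)}. Then u and f satisfy the ODE (2m−2)/m · (u''/u + (n−m)(f'/f)(u'/u)) = −(n−m)·f''/f − λ for all r ∈ ℝ. -/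
set_option maxHeartbeats 1000000

private lemma coshrpow_hasDeriv (a p r : ℝ) :
    HasDerivAt (fun x : ℝ => Real.cosh (a * x) ^ p)
      (p * Real.cosh (a * r) ^ (p - 1) * (a * Real.sinh (a * r))) r := by
  have h1 : HasDerivAt (fun x : ℝ => a * x) a r := by
    simpa using (hasDerivAt_id r).const_mul a
  have h2 : HasDerivAt (fun x : ℝ => Real.cosh (a * x)) (Real.sinh (a * r) * a) r :=
    (Real.hasDerivAt_cosh (a * r)).comp r h1
  have h3 := h2.rpow_const (p := p) (Or.inl (Real.cosh_pos (a * r)).ne')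
  convert h3 using 1
  ring

private lemma coshrpow_deriv (a p : ℝ) :
    deriv (fun x : ℝ => Real.cosh (a * x) ^ p)
      = fun r => p * Real.cosh (a * r) ^ (p - 1) * (a * Real.sinh (a * r)) := by
  funext r
  exact (coshrpow_hasDeriv a p r).deriv

private lemma coshrpow_deriv2 (a p r : ℝ) :
    deriv (fun x : ℝ => p * Real.cosh (a * x) ^ (p - 1) * (a * Real.sinh (a * x))) r
      = p * ((p - 1) * Real.cosh (a * r) ^ (p - 2) * (a * Real.sinh (a * r)) * (a * Real.sinh (a * r))
          + Real.cosh (a * r) ^ (p - 1) * (a * (a * Real.cosh (a * r)))) := by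
  have h1 : HasDerivAt (fun x : ℝ => a * x) a r := by
    simpa using (hasDerivAt_id r).const_mul a
  have h4 : HasDerivAt (fun x : ℝ => Real.cosh (a * x) ^ (p - 1))
      ((p - 1) * Real.cosh (a * r) ^ (p - 1 - 1) * (a * Real.sinh (a * r))) r :=
    coshrpow_hasDeriv a (p - 1) r
  have h5 : HasDerivAt (fun x : ℝ => a * Real.sinh (a * x)) (a * (Real.cosh (a * r) * a)) r :=
    (((Real.hasDerivAt_sinh (a * r)).comp r h1)).const_mul a
  have h6 := (h4.mul h5).const_mul p
  rw [show (fun x : ℝ => p * Real.cosh (a * x) ^ (p - 1) * (a * Real.sinh (a * x)))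
      = (fun x : ℝ => p * (Real.cosh (a * x) ^ (p - 1) * (a * Real.sinh (a * x)))) from
      funext fun x => by ring]
  rw [HasDerivAt.deriv (f := fun x => p * (Real.cosh (a * x) ^ (p - 1) * (a * Real.sinh (a * x)))) h6]
  rw [show p - 1 - 1 = p - 2 from by ring]
  ring

theorem stmt_10 (n m : ℤ) (hm : 2 ≤ m) (hmn : m < n) (hnm : 2 < n - m)
    (hlt : (4 : ℝ) / ((n : ℝ) - (m : ℝ)) < (2 * (m : ℝ) - 2) / (m : ℝ))
    (lam : ℝ) (hlam : 0 < lam) (C3 C4 : ℝ)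
    (hC3 : C3 = -2 / ((n : ℝ) - (m : ℝ) - 2))
    (hC4 : C4 = (((n : ℝ) - (m : ℝ)) - 2 * (m : ℝ) / ((m : ℝ) - 1)) /
      ((n : ℝ) - (m : ℝ) - 2) ^ 2)
    (u f : ℝ → ℝ)
    (hu : u = fun r : ℝ =>
      (Real.cosh (Real.sqrt (C4 * lam) * r)) ^ (-(m : ℝ) * C3 / ((2 * (m : ℝ) - 2) * C4)))
    (hf : f = fun r : ℝ =>
      (Real.cosh (Real.sqrt (C4 * lam) * r)) ^ ((C3 - 1) / (((n : ℝ) - (m : ℝ)) * C4))) :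
    C3 < 0 ∧ 0 < C4 ∧
      ∀ r : ℝ,
        (2 * (m : ℝ) - 2) / (m : ℝ) *
            (deriv (deriv u) r / u r +
              ((n : ℝ) - (m : ℝ)) * (deriv f r / f r) * (deriv u r / u r))
          = -((n : ℝ) - (m : ℝ)) * (deriv (deriv f) r / f r) - lam := by
  -- basic numeric facts
  have hmR : (2 : ℝ) ≤ (m : ℝ) := by exact_mod_cast hm
  have hnmR : (2 : ℝ) < (n : ℝ) - (m : ℝ) := by
    have : ((2 : ℤ) : ℝ) < ((n - m : ℤ) : ℝ) := by exact_mod_cast hnm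
    push_cast at this; linarith
  have hm0 : (m : ℝ) ≠ 0 := by linarith
  have hm1 : (m : ℝ) - 1 ≠ 0 := by linarith
  have h2m2 : 2 * (m : ℝ) - 2 ≠ 0 := by linarith
  have hnm0 : (n : ℝ) - (m : ℝ) ≠ 0 := by linarith
  have hnm2 : (n : ℝ) - (m : ℝ) - 2 ≠ 0 := by linarith
  have h4m : 4 * (m : ℝ) < (2 * (m : ℝ) - 2) * ((n : ℝ) - (m : ℝ)) := by
    rw [div_lt_div_iff₀ (by linarith) (by linarith)] at hlt
    linarith
  have hnum : 0 < ((n : ℝ) - (m : ℝ)) - 2 * (m : ℝ) / ((m : ℝ) - 1) := by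
    rw [sub_pos, div_lt_iff₀ (by linarith : (0:ℝ) < (m:ℝ) - 1)]
    nlinarith
  have hC4pos : 0 < C4 := by
    rw [hC4]
    exact div_pos hnum (by positivity)
  have hC3neg : C3 < 0 := by
    rw [hC3]
    apply div_neg_of_neg_of_pos <;> linarith
  refine ⟨hC3neg, hC4pos, ?_⟩
  intro r
  set a : ℝ := Real.sqrt (C4 * lam) with ha
  have ha2 : a ^ 2 = C4 * lam := Real.sq_sqrt (by positivity)
  have haa : a * a = C4 * lam := by rw [← ha2]; ring
  set pu : ℝ := -(m : ℝ) * C3 / ((2 * (m : ℝ) - 2) * C4) with hpu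
  set pf : ℝ := (C3 - 1) / (((n : ℝ) - (m : ℝ)) * C4) with hpf
  set c : ℝ := Real.cosh (a * r) with hc
  set s : ℝ := Real.sinh (a * r) with hs
  have hcpos : 0 < c := Real.cosh_pos (a * r)
  have hc0 : c ≠ 0 := hcpos.ne'
  have hcp1 : ∀ p : ℝ, c ^ (p - 1) = c ^ p / c := by
    intro p
    rw [Real.rpow_sub hcpos, Real.rpow_one]
  have hcp2 : ∀ p : ℝ, c ^ (p - 2) = c ^ p / c ^ 2 := by
    intro p
    rw [Real.rpow_sub hcpos]
    norm_num [Real.rpow_natCast]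
  have hX : ∀ p : ℝ, c ^ p ≠ 0 := fun p => (Real.rpow_pos_of_pos hcpos p).ne'
  -- u and its derivatives
  have hur : u r = c ^ pu := by rw [hu]
  have hfr : f r = c ^ pf := by rw [hf]
  have hdu : deriv u = fun x => pu * Real.cosh (a * x) ^ (pu - 1) * (a * Real.sinh (a * x)) := by
    rw [hu]; exact coshrpow_deriv a pu
  have hdf : deriv f = fun x => pf * Real.cosh (a * x) ^ (pf - 1) * (a * Real.sinh (a * x)) := by
    rw [hf]; exact coshrpow_deriv a pf
  have hdur : deriv u r = pu * c ^ (pu - 1) * (a * s) := by rw [hdu]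
  have hdfr : deriv f r = pf * c ^ (pf - 1) * (a * s) := by rw [hdf]
  have hddur : deriv (deriv u) r
      = pu * ((pu - 1) * c ^ (pu - 2) * (a * s) * (a * s) + c ^ (pu - 1) * (a * (a * c))) := by
    rw [hdu]; exact coshrpow_deriv2 a pu r
  have hddfr : deriv (deriv f) r
      = pf * ((pf - 1) * c ^ (pf - 2) * (a * s) * (a * s) + c ^ (pf - 1) * (a * (a * c))) := by
    rw [hdf]; exact coshrpow_deriv2 a pf r
  -- ratios
  have E1 : deriv u r / u r = pu * a * s / c := by
    rw [hdur, hur, hcp1]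
    field_simp [hX pu]
  have E2 : deriv f r / f r = pf * a * s / c := by
    rw [hdfr, hfr, hcp1]
    field_simp [hX pf]
  have E3 : deriv (deriv u) r / u r
      = C4 * lam * (pu * (pu - 1) * s ^ 2 / c ^ 2 + pu) := by
    rw [hddur, hur]
    have step : pu * ((pu - 1) * c ^ (pu - 2) * (a * s) * (a * s) + c ^ (pu - 1) * (a * (a * c)))
        = pu * ((pu - 1) * (c ^ pu / c ^ 2) * (C4 * lam) * s ^ 2 + (c ^ pu / c) * ((C4 * lam) * c)) := by
      rw [← haa, hcp1, hcp2]; ring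
    rw [step]
    field_simp [hX pu]
  have E4 : deriv (deriv f) r / f r
      = C4 * lam * (pf * (pf - 1) * s ^ 2 / c ^ 2 + pf) := by
    rw [hddfr, hfr]
    have step : pf * ((pf - 1) * c ^ (pf - 2) * (a * s) * (a * s) + c ^ (pf - 1) * (a * (a * c)))
        = pf * ((pf - 1) * (c ^ pf / c ^ 2) * (C4 * lam) * s ^ 2 + (c ^ pf / c) * ((C4 * lam) * c)) := by
      rw [← haa, hcp1, hcp2]; ring
    rw [step]
    field_simp [hX pf]
  rw [E1, E2, E3, E4]
  have Ecross : ((n : ℝ) - (m : ℝ)) * (pf * a * s / c) * (pu * a * s / c)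
      = ((n : ℝ) - (m : ℝ)) * pf * pu * (C4 * lam) * (s ^ 2 / c ^ 2) := by
    rw [← haa]; field_simp
  rw [Ecross]
  have hC4ne : C4 ≠ 0 := hC4pos.ne'
  have hnumne : ((n : ℝ) - (m : ℝ)) - 2 * (m : ℝ) / ((m : ℝ) - 1) ≠ 0 := ne_of_gt hnum
  have I1 : (2 * (m : ℝ) - 2) / (m : ℝ) * (pu * (C4 * lam))
      + ((n : ℝ) - (m : ℝ)) * (pf * (C4 * lam)) + lam = 0 := by
    rw [hpu, hpf, hC3]
    field_simp
    ring
  set E : ℝ := ((n : ℝ) - (m : ℝ)) * ((m : ℝ) - 1) - 2 * (m : ℝ) with hE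
  have hEpos : 0 < E := by
    have := mul_pos hnum (show (0:ℝ) < (m:ℝ) - 1 by linarith)
    rw [sub_mul, div_mul_cancel₀ _ hm1] at this
    rw [hE]; linarith
  have hEne : E ≠ 0 := ne_of_gt hEpos
  have hpuv : pu = (m : ℝ) * ((n : ℝ) - (m : ℝ) - 2) / E := by
    rw [hpu, hC3, hC4, hE]
    field_simp
  have hpfv : pf = -((m : ℝ) - 1) * ((n : ℝ) - (m : ℝ) - 2) / E := by
    rw [hpf, hC3, hC4, hE]
    field_simp
    ring
  have I2 : (2 * (m : ℝ) - 2) / (m : ℝ) * (pu * (pu - 1) + ((n : ℝ) - (m : ℝ)) * pf * pu)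
      + ((n : ℝ) - (m : ℝ)) * pf * (pf - 1) = 0 := by
    rw [hpuv, hpfv]
    field_simp
    ring
  linear_combination I1 + C4 * lam * (s ^ 2 / c ^ 2) * I2
end

section
/- Let h(r) solve h' = −λ + c·h² where c = (n−m − 4m/(2m−2))/(n−m−2)², and define u and f by (2m−2)/m·(log u)' = 2h/(2−n+m) and (n−m)(log f)' = h − (2m−2)/m·(log u)'. Then u and f satisfy (2m−2)/m·(u''/u + (n−m)(f'/f)(u'/u)) = −(n−m)f''/f − λ. -/
theorem stmt_11 (n m : ℤ) (hm : 2 ≤ m) (hnm : 2 < n - m) (lam c : ℝ)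
    (hc : c = (((n : ℝ) - (m : ℝ)) - 4 * (m : ℝ) / (2 * (m : ℝ) - 2)) /
      ((n : ℝ) - (m : ℝ) - 2) ^ 2)
    (h u f : ℝ → ℝ)
    (hh : ContDiff ℝ 1 h) (hu : ContDiff ℝ 2 u) (hf : ContDiff ℝ 2 f)
    (hupos : ∀ r, 0 < u r) (hfpos : ∀ r, 0 < f r)
    (hODEh : ∀ r, deriv h r = -lam + c * (h r) ^ 2)
    (hODEu : ∀ r, (2 * (m : ℝ) - 2) / (m : ℝ) * deriv (fun s => Real.log (u s)) r
      = 2 * h r / (2 - (n : ℝ) + (m : ℝ)))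
    (hODEf : ∀ r, ((n : ℝ) - (m : ℝ)) * deriv (fun s => Real.log (f s)) r
      = h r - (2 * (m : ℝ) - 2) / (m : ℝ) * deriv (fun s => Real.log (u s)) r) :
    ∀ r : ℝ,
      (2 * (m : ℝ) - 2) / (m : ℝ) *
          (deriv (deriv u) r / u r +
            ((n : ℝ) - (m : ℝ)) * (deriv f r / f r) * (deriv u r / u r))
        = -((n : ℝ) - (m : ℝ)) * (deriv (deriv f) r / f r) - lam := by
  intro r
  have hm2 : (2 : ℝ) ≤ (m : ℝ) := by exact_mod_cast hm
  have hN : (2 : ℝ) < (n : ℝ) - (m : ℝ) := by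
    have : ((2 : ℤ) : ℝ) < ((n - m : ℤ) : ℝ) := by exact_mod_cast hnm
    push_cast at this; linarith
  have hm0 : (m : ℝ) ≠ 0 := by linarith
  have h2m2 : 2 * (m : ℝ) - 2 ≠ 0 := by linarith
  have hm1 : (m : ℝ) - 1 ≠ 0 := by linarith
  have h2nm : 2 - (n : ℝ) + (m : ℝ) ≠ 0 := by intro hx; linarith
  have hnm0 : (n : ℝ) - (m : ℝ) ≠ 0 := by linarith
  have hnm2 : (n : ℝ) - (m : ℝ) - 2 ≠ 0 := by intro hx; linarith
  have hud : ∀ x, HasDerivAt u (deriv u x) x := fun x =>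
    ((hu.differentiable (by norm_num)) x).hasDerivAt
  have hfd : ∀ x, HasDerivAt f (deriv f x) x := fun x =>
    ((hf.differentiable (by norm_num)) x).hasDerivAt
  have hhd : ∀ x, HasDerivAt h (deriv h x) x := fun x =>
    ((hh.differentiable (by norm_num)) x).hasDerivAt
  have hlogu : ∀ x, deriv (fun s => Real.log (u s)) x = deriv u x / u x := fun x =>
    ((hud x).log (hupos x).ne').deriv
  have hlogf : ∀ x, deriv (fun s => Real.log (f s)) x = deriv f x / f x := fun x =>
    ((hfd x).log (hfpos x).ne').deriv
  -- constants
  set Ku : ℝ := (2 * (m : ℝ)) / ((2 * (m : ℝ) - 2) * (2 - (n : ℝ) + (m : ℝ))) with hKu_def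
  set Kf : ℝ := 1 / ((n : ℝ) - (m : ℝ) - 2) with hKf_def
  have hKu : ∀ x, deriv u x = u x * Ku * h x := by
    intro x
    have e := hODEu x
    rw [hlogu x] at e
    have hux := (hupos x).ne'
    rw [hKu_def]
    field_simp at e ⊢
    linarith [e]
  have hKf : ∀ x, deriv f x = f x * Kf * h x := by
    intro x
    have e := hODEf x
    have e2 := hODEu x
    rw [hlogf x] at e
    have hfx := (hfpos x).ne'
    rw [e2] at e
    rw [hKf_def]
    field_simp at e ⊢
    nlinarith [e]
  have hddu : deriv (deriv u) r = (u r * Ku * h r) * Ku * h r + u r * Ku * deriv h r := by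
    have h1 := (((hud r).mul_const Ku).mul (hhd r)).deriv
    rw [hKu r] at h1
    rw [show deriv u = fun x => u x * Ku * h x from funext hKu]
    exact h1
  have hddf : deriv (deriv f) r = (f r * Kf * h r) * Kf * h r + f r * Kf * deriv h r := by
    have h1 := (((hfd r).mul_const Kf).mul (hhd r)).deriv
    rw [hKf r] at h1
    rw [show deriv f = fun x => f x * Kf * h x from funext hKf]
    exact h1
  have hur := (hupos r).ne'
  have hfr := (hfpos r).ne'
  rw [hddu, hddf, hKu r, hKf r, hODEh r, hc, hKu_def, hKf_def]
  field_simp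
  ring
end
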